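/- Fix a failure state x_f ∈ ℝ⁶ with components (δx_f, δy_f, δz_f, δẋ_f, δẏ_f, δż_f). For θ ≥ 0 let x(θ) = exp((θ/ω)·A)·x_f be the coast state after the target has advanced by anomaly θ, and define the circularization burn ΔV_circ(θ) = (−x₄(θ), −(3/2)·ω·x₁(θ) − x₅(θ), −x₆(θ)) ∈ ℝ³, i.e. the impulse bringing the coasting state onto a circularized relative orbit. Then the squared burn magnitude ‖ΔV_circ(θ)‖² is differentiable in θ with derivative d/dθ ‖ΔV_circ(θ)‖² = [ (3/4)·(3ω·δx_f + 2·δẏ_f)² − (3/4)·δẋ_f² + ω²·δz_f² − δż_f² ]·sin(2θ) + [ (3/2)·δẋ_f·(3ω·δx_f + 2·δẏ_f) − 2ω·δż_f·δz_f ]·cos(2θ). Consequently, any interior unconstrained minimizer θ* of ‖ΔV_circ(θ)‖² satisfies tan(2θ*) = −[ (3/2)·δẋ_f·(3ω·δx_f + 2·δẏ_f) − 2ω·δż_f·δz_f ] / [ (3/4)·(3ω·δx_f + 2·δẏ_f)² − (3/4)·δẋ_f² + ω²·δz_f² − δż_f² ] whenever the denominator is nonzero. -/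

import Mathlib

noncomputable section

/-- Euclidean norm of a finite real vector. -/
def euclidNorm {m : ℕ} (v : Fin m → ℝ) : ℝ := Real.sqrt (∑ i, v i ^ 2)

/-- The CWH dynamics matrix. -/
def cwhA (ω : ℝ) : Matrix (Fin 6) (Fin 6) ℝ :=
  !![0, 0, 0, 1, 0, 0;
     0, 0, 0, 0, 1, 0;
     0, 0, 0, 0, 0, 1;
     3*ω^2, 0, 0, 0, 2*ω, 0;
     0, 0, 0, -2*ω, 0, 0;
     0, 0, -ω^2, 0, 0, 0]

/-- The CWH input matrix `B = [0; I₃]`. -/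
def cwhB : Matrix (Fin 6) (Fin 3) ℝ :=
  !![0, 0, 0;
     0, 0, 0;
     0, 0, 0;
     1, 0, 0;
     0, 1, 0;
     0, 0, 1]

/-- State transition matrix `exp(t A)`. -/
def expm (ω t : ℝ) : Matrix (Fin 6) (Fin 6) ℝ := NormedSpace.exp (t • cwhA ω)

/-- Horizontal concatenation of two `6 × 3` blocks into a `6 × 6` matrix. -/
def blockCat (M N : Matrix (Fin 6) (Fin 3) ℝ) : Matrix (Fin 6) (Fin 6) ℝ :=
  Matrix.of fun i j => if h : (j : ℕ) < 3 then M i ⟨j, h⟩ else N i ⟨(j : ℕ) - 3, by omega⟩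

/-- The aggregated impulse matrix `Φ_v(T) = [exp(T A) B  B]`. -/
def Phiv (ω T : ℝ) : Matrix (Fin 6) (Fin 6) ℝ := blockCat (expm ω T * cwhB) cwhB

/-- The two-impulse Gramian `G(T) = Φ_v(T) Φ_v(T)ᵀ`. -/
def gram (ω T : ℝ) : Matrix (Fin 6) (Fin 6) ℝ := Phiv ω T * (Phiv ω T).transpose

/-- First three components of a 6-vector. -/
def first3 (v : Fin 6 → ℝ) : Fin 3 → ℝ := fun i => v ⟨(i : ℕ), by omega⟩

/-- Last three components of a 6-vector. -/
def last3 (v : Fin 6 → ℝ) : Fin 3 → ℝ := fun i => v ⟨(i : ℕ) + 3, by omega⟩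

/-- The stacked two-impulse steering solution. -/
def dVsteer (ω T : ℝ) (x₀ xf : Fin 6 → ℝ) : Fin 6 → ℝ :=
  (Phiv ω T)⁻¹.mulVec (xf - (expm ω T).mulVec x₀)

/-- The fixed-duration two-impulse steering cost `J_T(x₀, x_f)`. -/
def Jfix (ω T : ℝ) (x₀ xf : Fin 6 → ℝ) : ℝ :=
  euclidNorm (first3 (dVsteer ω T x₀ xf)) + euclidNorm (last3 (dVsteer ω T x₀ xf))

/-- Euclidean operator norm of a `6 × 6` real matrix. -/
def opNorm (M : Matrix (Fin 6) (Fin 6) ℝ) : ℝ :=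
  ‖(Matrix.toEuclideanCLM (𝕜 := ℝ) M : EuclideanSpace ℝ (Fin 6) →L[ℝ] EuclideanSpace ℝ (Fin 6))‖

/-- The coasting state after the target has advanced by anomaly `θ`, starting from `x_f`. -/
def coast (ω : ℝ) (xf : Fin 6 → ℝ) (θ : ℝ) : Fin 6 → ℝ := (expm ω (θ / ω)).mulVec xf

/-- The circularization burn at anomaly `θ`:
`ΔV_circ(θ) = (−x₄(θ), −(3/2) ω x₁(θ) − x₅(θ), −x₆(θ))`. -/
def dVcirc (ω : ℝ) (xf : Fin 6 → ℝ) (θ : ℝ) : Fin 3 → ℝ :=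
  ![-(coast ω xf θ 3), -(3 / 2 * ω * coast ω xf θ 0) - coast ω xf θ 4, -(coast ω xf θ 5)]

/-! The state transition matrix `exp(tA)` has the Clohessy–Wiltshire closed form
`C₀ + cos(ωt) C₁ + sin(ωt) C₂ + t C₃`: the right-hand side solves `S' = A S`, `S 0 = 1`, so
uniqueness of solutions of linear ODEs identifies it with the exponential. The constant and
secular terms cancel out of the circularization burn, whose three components are therefore pure
harmonics `a cos θ + b sin θ` in the anomaly `θ = ωt`. Since
`d/dθ (a cos θ + b sin θ)² = (b² - a²) sin 2θ + 2ab cos 2θ`, summing over the components gives the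
derivative `E sin 2θ + F cos 2θ`. It vanishes at an interior minimizer, and there `E ≠ 0` forces
`cos 2θ ≠ 0`, so `tan 2θ = -F/E`. -/

open Real

theorem eq_exp_smul_of_hasDerivAt {𝔸 : Type*} [NormedRing 𝔸] [NormedAlgebra ℝ 𝔸]
    [CompleteSpace 𝔸] {A : 𝔸} {S : ℝ → 𝔸} (hS : ∀ t, HasDerivAt S (A * S t) t)
    (h0 : S 0 = 1) : S = fun t => NormedSpace.exp (t • A) :=
  ODE_solution_unique_univ (v := fun _ x => A * x) (s := fun _ => Set.univ) (t₀ := 0)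
    (fun _ => ((ContinuousLinearMap.mul ℝ 𝔸 A).lipschitz).lipschitzOnWith)
    (fun t => ⟨hS t, trivial⟩)
    (fun t => ⟨hasDerivAt_exp_smul_const' A t, trivial⟩)
    (by simp [h0])

theorem hasDerivAt_sq_mul_cos_add_mul_sin (a b θ : ℝ) :
    HasDerivAt (fun θ => (a * cos θ + b * sin θ) ^ 2)
      ((b ^ 2 - a ^ 2) * sin (2 * θ) + 2 * a * b * cos (2 * θ)) θ := by
  have h := (((hasDerivAt_cos θ).const_mul a).add ((hasDerivAt_sin θ).const_mul b)).pow 2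
  refine h.congr_deriv ?_
  rw [sin_two_mul, cos_two_mul']
  simp only [Pi.add_apply]
  ring

theorem tan_eq_neg_div_of_mul_sin_add_mul_cos_eq_zero {E F x : ℝ} (hE : E ≠ 0)
    (h : E * sin x + F * cos x = 0) : tan x = -F / E := by
  have hcos : cos x ≠ 0 := by
    intro hc
    have hsin : sin x ^ 2 = 1 := by nlinarith [sin_sq_add_cos_sq x]
    have : E * sin x = 0 := by simpa [hc] using h
    rcases mul_eq_zero.1 this with h' | h'
    · exact hE h'
    · simp [h'] at hsin
  rw [tan_eq_sin_div_cos, div_eq_div_iff hcos hE]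
  linear_combination h

def cwStmConst (ω : ℝ) : Matrix (Fin 6) (Fin 6) ℝ :=
  !![4, 0, 0, 0, 2/ω, 0;
     0, 1, 0, -2/ω, 0, 0;
     0, 0, 0, 0, 0, 0;
     0, 0, 0, 0, 0, 0;
     -6*ω, 0, 0, 0, -3, 0;
     0, 0, 0, 0, 0, 0]

def cwStmCos (ω : ℝ) : Matrix (Fin 6) (Fin 6) ℝ :=
  !![-3, 0, 0, 0, -2/ω, 0;
     0, 0, 0, 2/ω, 0, 0;
     0, 0, 1, 0, 0, 0;
     0, 0, 0, 1, 0, 0;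
     6*ω, 0, 0, 0, 4, 0;
     0, 0, 0, 0, 0, 1]

def cwStmSin (ω : ℝ) : Matrix (Fin 6) (Fin 6) ℝ :=
  !![0, 0, 0, 1/ω, 0, 0;
     6, 0, 0, 0, 4/ω, 0;
     0, 0, 0, 0, 0, 1/ω;
     3*ω, 0, 0, 0, 2, 0;
     0, 0, 0, -2, 0, 0;
     0, 0, -ω, 0, 0, 0]

def cwStmSecular (ω : ℝ) : Matrix (Fin 6) (Fin 6) ℝ :=
  !![0, 0, 0, 0, 0, 0;
     -6*ω, 0, 0, 0, -3, 0;
     0, 0, 0, 0, 0, 0;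
     0, 0, 0, 0, 0, 0;
     0, 0, 0, 0, 0, 0;
     0, 0, 0, 0, 0, 0]

def cwStm (ω t : ℝ) : Matrix (Fin 6) (Fin 6) ℝ :=
  cwStmConst ω + cos (ω * t) • cwStmCos ω + sin (ω * t) • cwStmSin ω + t • cwStmSecular ω

section CWStm
variable {ω : ℝ}

theorem cwStmConst_add_cwStmCos : cwStmConst ω + cwStmCos ω = 1 := by
  ext i j
  fin_cases i <;> fin_cases j <;> simp [cwStmConst, cwStmCos] <;> ring

theorem cwhA_mul_cwStmConst : cwhA ω * cwStmConst ω = cwStmSecular ω := by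
  ext i j
  fin_cases i <;> fin_cases j <;>
    simp [cwhA, cwStmConst, cwStmSecular, Matrix.mul_apply, Fin.sum_univ_six] <;>
    field_simp <;> ring

theorem cwhA_mul_cwStmCos (hω : ω ≠ 0) : cwhA ω * cwStmCos ω = ω • cwStmSin ω := by
  ext i j
  fin_cases i <;> fin_cases j <;>
    simp [cwhA, cwStmCos, cwStmSin, Matrix.mul_apply, Fin.sum_univ_six] <;>
    field_simp <;> ring

theorem cwhA_mul_cwStmSin (hω : ω ≠ 0) : cwhA ω * cwStmSin ω = (-ω) • cwStmCos ω := by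
  ext i j
  fin_cases i <;> fin_cases j <;>
    simp [cwhA, cwStmCos, cwStmSin, Matrix.mul_apply, Fin.sum_univ_six] <;>
    field_simp <;> ring

theorem cwhA_mul_cwStmSecular : cwhA ω * cwStmSecular ω = 0 := by
  ext i j
  fin_cases i <;> fin_cases j <;> simp [cwhA, cwStmSecular, Matrix.mul_apply, Fin.sum_univ_six]

theorem cwStm_zero : cwStm ω 0 = 1 := by
  simp [cwStm, cwStmConst_add_cwStmCos]

attribute [local instance] Matrix.linftyOpNormedRing Matrix.linftyOpNormedAlgebra

theorem hasDerivAt_cwStm (hω : ω ≠ 0) (t : ℝ) :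
    HasDerivAt (cwStm ω) (cwhA ω * cwStm ω t) t := by
  have hωt : HasDerivAt (fun t => ω * t) ω t := by simpa using (hasDerivAt_id t).const_mul ω
  have h := (((hωt.cos.smul_const (cwStmCos ω)).const_add (cwStmConst ω)).add
    (hωt.sin.smul_const (cwStmSin ω))).add ((hasDerivAt_id t).smul_const (cwStmSecular ω))
  refine h.congr_deriv ?_
  rw [cwStm, mul_add, mul_add, mul_add, mul_smul_comm, mul_smul_comm, mul_smul_comm,
    cwhA_mul_cwStmConst, cwhA_mul_cwStmCos hω, cwhA_mul_cwStmSin hω, cwhA_mul_cwStmSecular,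
    smul_zero, smul_smul, smul_smul]
  simp only [one_smul]
  module

theorem expm_eq_cwStm (hω : ω ≠ 0) (t : ℝ) : expm ω t = cwStm ω t :=
  (congrFun (eq_exp_smul_of_hasDerivAt (hasDerivAt_cwStm hω) cwStm_zero) t).symm

end CWStm

theorem euclidNorm_sq {m : ℕ} (v : Fin m → ℝ) : euclidNorm v ^ 2 = ∑ i, v i ^ 2 :=
  sq_sqrt (Finset.sum_nonneg fun i _ => sq_nonneg (v i))

theorem dVcirc_eq {ω : ℝ} (hω : ω ≠ 0) (xf : Fin 6 → ℝ) (θ : ℝ) :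
    dVcirc ω xf θ =
      -![xf 3 * cos θ + (3 * ω * xf 0 + 2 * xf 4) * sin θ,
        (3 * ω * xf 0 + 2 * xf 4) / 2 * cos θ + -(xf 3 / 2) * sin θ,
        xf 5 * cos θ + -(ω * xf 2) * sin θ] := by
  have hθ : ω * (θ / ω) = θ := mul_div_cancel₀ θ hω
  ext i
  fin_cases i <;>
    simp [dVcirc, coast, expm_eq_cwStm hω, cwStm, Matrix.mulVec, dotProduct, Fin.sum_univ_six,
      cwStmConst, cwStmCos, cwStmSin, cwStmSecular, hθ] <;> field_simp <;> ring

theorem euclidNorm_dVcirc_sq {ω : ℝ} (hω : ω ≠ 0) (xf : Fin 6 → ℝ) (θ : ℝ) :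
    euclidNorm (dVcirc ω xf θ) ^ 2 =
      (xf 3 * cos θ + (3 * ω * xf 0 + 2 * xf 4) * sin θ) ^ 2 +
        ((3 * ω * xf 0 + 2 * xf 4) / 2 * cos θ + -(xf 3 / 2) * sin θ) ^ 2 +
        (xf 5 * cos θ + -(ω * xf 2) * sin θ) ^ 2 := by
  rw [euclidNorm_sq, dVcirc_eq hω, Fin.sum_univ_three]
  simp only [Pi.neg_apply, neg_sq]
  rfl

/-- **Stationarity condition for the minimal-fuel circularization burn.**
The squared burn magnitude `‖ΔV_circ(θ)‖²` is differentiable with derivative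
`E sin(2θ) + F cos(2θ)`, where `E` and `F` are the stated functions of the failure state;
consequently any interior unconstrained minimizer `θ*` satisfies `tan(2θ*) = −F/E`
whenever `E ≠ 0`. -/
theorem circularization_burn_stationarity (ω : ℝ) (hω : 0 < ω) (xf : Fin 6 → ℝ) :
    (∀ θ : ℝ, 0 ≤ θ →
      HasDerivAt (fun θ => euclidNorm (dVcirc ω xf θ) ^ 2)
        ((3 / 4 * (3 * ω * xf 0 + 2 * xf 4) ^ 2 - 3 / 4 * xf 3 ^ 2
            + ω ^ 2 * xf 2 ^ 2 - xf 5 ^ 2) * Real.sin (2 * θ) +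
         (3 / 2 * xf 3 * (3 * ω * xf 0 + 2 * xf 4) - 2 * ω * xf 5 * xf 2) * Real.cos (2 * θ))
        θ) ∧
    (∀ θs : ℝ, 0 < θs →
      IsLocalMin (fun θ => euclidNorm (dVcirc ω xf θ) ^ 2) θs →
      (3 / 4 * (3 * ω * xf 0 + 2 * xf 4) ^ 2 - 3 / 4 * xf 3 ^ 2
          + ω ^ 2 * xf 2 ^ 2 - xf 5 ^ 2) ≠ 0 →
      Real.tan (2 * θs) =
        -(3 / 2 * xf 3 * (3 * ω * xf 0 + 2 * xf 4) - 2 * ω * xf 5 * xf 2) /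
          (3 / 4 * (3 * ω * xf 0 + 2 * xf 4) ^ 2 - 3 / 4 * xf 3 ^ 2
            + ω ^ 2 * xf 2 ^ 2 - xf 5 ^ 2)) := by
  have hderiv : ∀ θ : ℝ, HasDerivAt (fun θ => euclidNorm (dVcirc ω xf θ) ^ 2)
      ((3 / 4 * (3 * ω * xf 0 + 2 * xf 4) ^ 2 - 3 / 4 * xf 3 ^ 2
          + ω ^ 2 * xf 2 ^ 2 - xf 5 ^ 2) * sin (2 * θ) +
        (3 / 2 * xf 3 * (3 * ω * xf 0 + 2 * xf 4) - 2 * ω * xf 5 * xf 2) * cos (2 * θ)) θ := by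
    intro θ
    rw [funext (euclidNorm_dVcirc_sq hω.ne' xf)]
    refine (((hasDerivAt_sq_mul_cos_add_mul_sin _ _ θ).add
      (hasDerivAt_sq_mul_cos_add_mul_sin _ _ θ)).add
        (hasDerivAt_sq_mul_cos_add_mul_sin _ _ θ)).congr_deriv ?_
    ring
  exact ⟨fun θ _ => hderiv θ, fun θs _ hmin hE =>
    tan_eq_neg_div_of_mul_sin_add_mul_cos_eq_zero hE (hmin.hasDerivAt_eq_zero (hderiv θs))⟩

end
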